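/- Every Hamming (t, T)-light complete traceability code is a Euclidean (t, δ)-light complete traceability code with δ = sqrt(2T)/(2t(t-1)), for t ≥ 2. -/

import Mathlib

open Finset

/-- Result of the averaging attack: the average of the columns of `H` indexed by `I`. -/
noncomputable def avgCols {n M : ℕ} (H : Fin n → Fin M → ℝ) (I : Finset (Fin M)) : Fin n → ℝ :=
  fun j => (I.card : ℝ)⁻¹ * ∑ i ∈ I, H j i

/-- `H` has entries in `{0, 1}`. -/
def IsBinaryMatrix {n M : ℕ} (H : Fin n → Fin M → ℝ) : Prop :=
  ∀ j i, H j i = 0 ∨ H j i = 1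

/-- `H` is a Hamming `(t, T)`-light complete traceability code: the averaged columns of
any two distinct coalitions of size at most `t` differ in more than `2T` coordinates. -/
def IsHammingLCT {n M : ℕ} (H : Fin n → Fin M → ℝ) (t T : ℕ) : Prop :=
  ∀ I₁ I₂ : Finset (Fin M), I₁.Nonempty → I₂.Nonempty → I₁ ≠ I₂ →
    I₁.card ≤ t → I₂.card ≤ t →
    2 * T < (Finset.univ.filter (fun j => avgCols H I₁ j ≠ avgCols H I₂ j)).card

/-- `H` is a Euclidean `(t, δ)`-light complete traceability code: the averaged columns of
any two distinct coalitions of size at most `t` are at Euclidean distance more than `2δ`. -/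
def IsEuclideanLCT {n M : ℕ} (H : Fin n → Fin M → ℝ) (t : ℕ) (δ : ℝ) : Prop :=
  ∀ I₁ I₂ : Finset (Fin M), I₁.Nonempty → I₂.Nonempty → I₁ ≠ I₂ →
    I₁.card ≤ t → I₂.card ≤ t →
    2 * δ < Real.sqrt (∑ j, (avgCols H I₁ j - avgCols H I₂ j) ^ 2)


/-!
For a binary matrix every coordinate of `σ(H|I)` is a fraction `a / p` with `p = |I| ≤ t`.
The difference of two such fractions is a multiple of `1 / lcm(p, q)`, and
`lcm(p, q) ≤ t (t - 1)`: it is `p` if `p = q`, and at most `p q` with `min(p, q) ≤ t - 1`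
otherwise. Hence every nonzero coordinate of `σ(H|I₁) - σ(H|I₂)` has absolute value at least
`c = 1 / (t (t - 1))`, and more than `2T` such coordinates give Euclidean distance at least
`c √(2T + 1) > c √(2T) = 2δ`.
-/

lemma Nat.lcm_le_mul_pred {p q t : ℕ} (ht : 2 ≤ t) (hp : 0 < p) (hq : 0 < q)
    (hpt : p ≤ t) (hqt : q ≤ t) : Nat.lcm p q ≤ t * (t - 1) := by
  rcases lt_trichotomy p q with hlt | rfl | hgt
  · calc Nat.lcm p q ≤ p * q := Nat.le_of_dvd (by positivity) (Nat.lcm_dvd_mul p q)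
      _ ≤ (t - 1) * t := Nat.mul_le_mul (by omega) hqt
      _ = t * (t - 1) := Nat.mul_comm _ _
  · rw [Nat.lcm_self]
    exact hpt.trans (Nat.le_mul_of_pos_right t (by omega))
  · calc Nat.lcm p q ≤ p * q := Nat.le_of_dvd (by positivity) (Nat.lcm_dvd_mul p q)
      _ ≤ t * (t - 1) := Nat.mul_le_mul hpt (by omega)

lemma one_div_le_abs_of_mul_eq_intCast {x d : ℝ} {k : ℤ} (hd : 0 < d) (hx : x ≠ 0)
    (hk : d * x = k) : 1 / d ≤ |x| := by
  have hk0 : k ≠ 0 := by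
    rintro rfl
    exact hx ((mul_eq_zero.1 (by exact_mod_cast hk)).resolve_left hd.ne')
  have h1 : (1 : ℝ) ≤ d * |x| := by
    rw [← abs_of_pos hd, ← abs_mul, hk, ← Int.cast_abs]
    exact_mod_cast Int.one_le_abs hk0
  rwa [div_le_iff₀ hd, mul_comm]

lemma one_div_mul_pred_le_abs_div_sub_div {a b : ℤ} {p q t : ℕ} (ht : 2 ≤ t)
    (hp : 0 < p) (hq : 0 < q) (hpt : p ≤ t) (hqt : q ≤ t) (hne : (a : ℝ) / p ≠ b / q) :
    1 / (t * (t - 1) : ℝ) ≤ |(a : ℝ) / p - b / q| := by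
  set d := Nat.lcm p q
  have hd : 0 < d := Nat.lcm_pos hp hq
  have hdt : (d : ℝ) ≤ t * (t - 1) := by
    rw [← Nat.cast_pred (by omega), ← Nat.cast_mul]
    exact_mod_cast Nat.lcm_le_mul_pred ht hp hq hpt hqt
  obtain ⟨u, hu⟩ := Nat.dvd_lcm_left p q
  obtain ⟨v, hv⟩ := Nat.dvd_lcm_right p q
  have hmul : (d : ℝ) * ((a : ℝ) / p - b / q) = ((a * u - b * v : ℤ) : ℝ) := by
    have hpu : (d : ℝ) * (a / p) = a * u := by
      rw [show (d : ℝ) = p * u by exact_mod_cast hu]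
      field_simp
    have hqv : (d : ℝ) * (b / q) = b * v := by
      rw [show (d : ℝ) = q * v by exact_mod_cast hv]
      field_simp
    rw [mul_sub, hpu, hqv]
    push_cast
    ring
  calc 1 / (t * (t - 1) : ℝ) ≤ 1 / d := one_div_le_one_div_of_le (by positivity) hdt
    _ ≤ _ := one_div_le_abs_of_mul_eq_intCast (by positivity) (sub_ne_zero.2 hne) hmul

lemma avgCols_eq_card_filter_div {n M : ℕ} {H : Fin n → Fin M → ℝ} (hbin : IsBinaryMatrix H)
    (I : Finset (Fin M)) (j : Fin n) :
    avgCols H I j = (#{i ∈ I | H j i = 1} : ℝ) / #I := by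
  have hsum : ∑ i ∈ I, H j i = ∑ i ∈ I, if H j i = 1 then 1 else 0 := by
    refine sum_congr rfl fun i _ => ?_
    rcases hbin j i with h | h <;> simp [h]
  rw [avgCols, hsum, sum_boole, div_eq_inv_mul]

lemma one_div_mul_pred_le_abs_avgCols_sub {n M t : ℕ} (ht : 2 ≤ t) {H : Fin n → Fin M → ℝ}
    (hbin : IsBinaryMatrix H) {I₁ I₂ : Finset (Fin M)} (h₁ : I₁.Nonempty) (h₂ : I₂.Nonempty)
    (hc₁ : #I₁ ≤ t) (hc₂ : #I₂ ≤ t) {j : Fin n} (hne : avgCols H I₁ j ≠ avgCols H I₂ j) :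
    1 / (t * (t - 1) : ℝ) ≤ |avgCols H I₁ j - avgCols H I₂ j| := by
  rw [avgCols_eq_card_filter_div hbin, avgCols_eq_card_filter_div hbin] at hne ⊢
  simpa only [Int.cast_natCast] using one_div_mul_pred_le_abs_div_sub_div
    (a := #{i ∈ I₁ | H j i = 1}) (b := #{i ∈ I₂ | H j i = 1}) ht h₁.card_pos h₂.card_pos hc₁ hc₂
    (by simpa only [Int.cast_natCast] using hne)

lemma mul_sqrt_card_ne_le_sqrt_sum_sq {ι : Type*} [Fintype ι] {x y : ι → ℝ} {c : ℝ}
    (hc : 0 ≤ c) (hxy : ∀ j, x j ≠ y j → c ≤ |x j - y j|) :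
    c * √(#{j | x j ≠ y j} : ℝ) ≤ √(∑ j, (x j - y j) ^ 2) := by
  rw [← Real.sqrt_sq hc, ← Real.sqrt_mul (sq_nonneg c), mul_comm]
  refine Real.sqrt_le_sqrt ?_
  calc (#{j | x j ≠ y j} : ℝ) * c ^ 2 = ∑ j ∈ {j | x j ≠ y j}, c ^ 2 := by
        rw [sum_const, nsmul_eq_mul]
    _ ≤ ∑ j ∈ {j | x j ≠ y j}, (x j - y j) ^ 2 := by
        refine sum_le_sum fun j hj => ?_
        rw [← sq_abs (x j - y j)]
        exact pow_le_pow_left₀ hc (hxy j (mem_filter.1 hj).2) 2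
    _ ≤ ∑ j, (x j - y j) ^ 2 :=
        sum_le_sum_of_subset_of_nonneg (subset_univ _) fun j _ _ => sq_nonneg _

theorem hamming_to_euclidean_LCT {n M t T : ℕ} (ht : 2 ≤ t)
    (H : Fin n → Fin M → ℝ) (hbin : IsBinaryMatrix H)
    (hH : IsHammingLCT H t T) :
    IsEuclideanLCT H t (Real.sqrt (2 * T) / (2 * t * (t - 1))) := by
  intro I₁ I₂ h₁ h₂ hI hc₁ hc₂
  have hT : (2 * T : ℝ) < #{j | avgCols H I₁ j ≠ avgCols H I₂ j} := by
    exact_mod_cast hH I₁ I₂ h₁ h₂ hI hc₁ hc₂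
  have htt : (0 : ℝ) < t * (t - 1) := by
    have : (2 : ℝ) ≤ t := by exact_mod_cast ht
    nlinarith
  calc 2 * (√(2 * T) / (2 * t * (t - 1))) = 1 / (t * (t - 1)) * √(2 * T) := by
        field_simp
    _ < 1 / (t * (t - 1)) * √(#{j | avgCols H I₁ j ≠ avgCols H I₂ j} : ℝ) := by
        gcongr
    _ ≤ _ := mul_sqrt_card_ne_le_sqrt_sum_sq (by positivity) fun j hne =>
        one_div_mul_pred_le_abs_avgCols_sub ht hbin h₁ h₂ hc₁ hc₂ hne
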